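/- Let γ, δ, τ be nonzero ordinals with δ and τ of uncountable cofinality, and Σ = ⟨S_β : β < τ⟩ a partition of δ*. Let a ∈ L^{δ,γ} with |a| ≥ 2 and a(|a|−1) = 0, and let B be a countable collection of basic sets of I^{Σ,γ}, each contained in [a]⁻, such that no initial segment of L^{δ,γ} belongs to B. Then there is a countable collection E of pairwise disjoint basic sets contained in [a]⁻ such that: (a) every member of B is contained in a (unique) member of E; (b) every member of E contains some member of B; (c) no member of E is an initial segment of L^{δ,γ}; and (d) no two distinct members of E are both contained in a single basic set that is included in [a]⁻ and is not an initial segment of L^{δ,γ}. Moreover, the same statement holds with [a]⁻ replaced by [a]⁺. -/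

import Mathlib

/-!
Basic sets that are not initial segments are singletons or sets `J_{w⌢⟨l⟩}`, and two of them
that meet are comparable under inclusion, so they form a tree. A countable family of them with a
common point lies inside a single one: keep the shortest stem `w` and raise the last entry `l`
to the supremum of the countably many last entries, which stays below `τ` and `δ` because both
have uncountable cofinality. Calling two members of `𝓑` related when one such set contains both
gives an equivalence relation with countable classes, and one set of the tree containing a whole
class, chosen for each class, is the refinement.
-/

open Ordinal Cardinal

abbrev SOrd : Type 1 := Ordinalᵒᵈ ⊕ₗ Ordinal

namespace SOrd
def neg (α : Ordinal) : SOrd := toLex (Sum.inl (OrderDual.toDual α))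
def pos (α : Ordinal) : SOrd := toLex (Sum.inr α)
def IsPos (a : SOrd) : Prop := ∃ α : Ordinal, a = pos α
def val (a : SOrd) : Ordinal := Sum.elim (fun b => OrderDual.ofDual b) id (ofLex a)
end SOrd

def IsBetween (δ : Ordinal) (a : SOrd) : Prop := SOrd.neg δ < a ∧ a < SOrd.pos δ

def Lset (δ γ : Ordinal) : Set (List SOrd) :=
  {x | x ≠ [] ∧ (∃ h : 0 < x.length, ∃ α < γ, x[0]'h = SOrd.pos α) ∧
    ∀ k, ∀ h : k < x.length, 0 < k → IsBetween δ (x[k]'h)}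

def Llt (x y : List SOrd) : Prop :=
  (∃ k, ∃ hx : k < x.length, ∃ hy : k < y.length,
      x.take k = y.take k ∧ x[k]'hx < y[k]'hy) ∨
  (∃ hy : x.length < y.length, y.take x.length = x ∧ SOrd.IsPos (y[x.length]'hy)) ∨
  (∃ hx : y.length < x.length, x.take y.length = y ∧ ¬ SOrd.IsPos (x[y.length]'hx))

/-- `S` (as the indexed family `⟨S β : β < τ⟩`, where each `ξ ∈ S β` codes the
negative ordinal `ξ*`) is a partition of `δ*`. -/
def IsPartition (δ τ : Ordinal) (S : Ordinal → Set Ordinal) : Prop :=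
  (∀ β, S β ⊆ Set.Iio δ) ∧ (∀ β, τ ≤ β → S β = ∅) ∧ (∀ ξ, ξ < δ → ∃! β, ξ ∈ S β)

/-- `β^Σ(ξ*)`: the index of the piece of the partition containing `ξ*`. -/
noncomputable def colorOf (S : Ordinal → Set Ordinal) (ξ : Ordinal) : Ordinal :=
  sInf {β | ξ ∈ S β}

/-- The index set `r_x`. -/
def rIdx (τ : Ordinal) (x : List SOrd) : Set ℕ :=
  {i | ∃ h : i < x.length, 2 ≤ i ∧ i % 2 = 0 ∧ x[i]'h < SOrd.pos τ}

/-- `Σ`-relevant sequences. -/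
def Relevant (δ γ τ : Ordinal) (S : Ordinal → Set Ordinal) (x : List SOrd) : Prop :=
  x ∈ Lset δ γ ∧ 3 ≤ x.length ∧ x.length % 2 = 1 ∧
  (∀ i, ∀ h : i < x.length, (SOrd.IsPos (x[i]'h) ↔ i % 2 = 0)) ∧
  (∀ i ∈ rIdx τ x, ∀ j ∈ rIdx τ x, i < j →
    ∀ (hi : i - 1 < x.length) (hj : j - 1 < x.length),
      colorOf S (x[j-1]'hj).val < colorOf S (x[i-1]'hi).val) ∧
  x.length - 1 ∈ rIdx τ x

/-- `J^{Σ,γ}_x = {z ∈ L^{δ,γ} : x↾(|x|-1) ≤ z < x}`. -/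
def Jset (δ γ : Ordinal) (x : List SOrd) : Set (List SOrd) :=
  {z ∈ Lset δ γ | (z = x.take (x.length - 1) ∨ Llt (x.take (x.length - 1)) z) ∧ Llt z x}

/-- The initial segment `L^{δ,γ}_α = {z : z < ⟨α⟩}` (equal to `L^{δ,γ}` when `α = γ`). -/
def Lbelow (δ γ α : Ordinal) : Set (List SOrd) :=
  {z ∈ Lset δ γ | Llt z [SOrd.pos α]}

/-- `L^{δ,γ}_x = {z ∈ L^{δ,γ} : z < x}`. -/
def Lx (δ γ : Ordinal) (x : List SOrd) : Set (List SOrd) :=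
  {z ∈ Lset δ γ | Llt z x}

/-- The basic sets of `I^{Σ,γ}`. -/
def IsBasic (δ γ τ : Ordinal) (S : Ordinal → Set Ordinal) (B : Set (List SOrd)) : Prop :=
  (∃ α ≤ γ, B = Lbelow δ γ α) ∨
  (∃ x, Relevant δ γ τ S x ∧ B = Jset δ γ x) ∨
  (∃ z ∈ Lset δ γ, B = ({z} : Set (List SOrd)))

/-- `I^{Σ,γ}`: finite unions of basic sets. -/
def Ifam (δ γ τ : Ordinal) (S : Ordinal → Set Ordinal) : Set (Set (List SOrd)) :=
  {A | ∃ E : Finset (Set (List SOrd)), (∀ B ∈ E, IsBasic δ γ τ S B) ∧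
    A = ⋃ B ∈ E, (B : Set (List SOrd))}

/-- `I^{Σ,γ}_x = {A ⊆ L^{δ,γ}_x : A ∈ I^{Σ,γ}}`. -/
def Ix (δ γ τ : Ordinal) (S : Ordinal → Set Ordinal) (x : List SOrd) : Set (Set (List SOrd)) :=
  {A | A ⊆ Lx δ γ x ∧ A ∈ Ifam δ γ τ S}

/-- `[a]⁻`: the `x ∈ L^{δ,γ}` end-extending `a↾(|a|-1)` with `|x| ≥ |a|` and
`x(|a|-1) < a(|a|-1)`. -/
def bracketNeg (δ γ : Ordinal) (a : List SOrd) : Set (List SOrd) :=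
  {x ∈ Lset δ γ | a.length ≤ x.length ∧
    x.take (a.length - 1) = a.take (a.length - 1) ∧
    ∃ (hx : a.length - 1 < x.length) (ha : a.length - 1 < a.length),
      x[a.length - 1]'hx < a[a.length - 1]'ha}

/-- `[a]⁺`: the `x ∈ L^{δ,γ}` end-extending `a↾(|a|-1)` that are not in `[a]⁻`. -/
def bracketPos (δ γ : Ordinal) (a : List SOrd) : Set (List SOrd) :=
  {x ∈ Lset δ γ | a.length - 1 ≤ x.length ∧
    x.take (a.length - 1) = a.take (a.length - 1)} \ bracketNeg δ γ a

/-- `B` is a basic set which is an initial segment of `L^{δ,γ}`. -/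
def IsInitialSegmentBasic (δ γ : Ordinal) (B : Set (List SOrd)) : Prop :=
  ∃ α ≤ γ, B = Lbelow δ γ α

/-- The conclusion of the disjoint-refinement lemma for the region `K`. -/
def HasDisjointRefinement (δ γ τ : Ordinal) (S : Ordinal → Set Ordinal)
    (K : Set (List SOrd)) (𝓑 : Set (Set (List SOrd))) : Prop :=
  ∃ 𝓔 : Set (Set (List SOrd)), 𝓔.Countable ∧
    (∀ D ∈ 𝓔, IsBasic δ γ τ S D ∧ D ⊆ K) ∧
    𝓔.Pairwise Disjoint ∧
    (∀ C ∈ 𝓑, ∃! D, D ∈ 𝓔 ∧ C ⊆ D) ∧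
    (∀ D ∈ 𝓔, ∃ C ∈ 𝓑, C ⊆ D) ∧
    (∀ D ∈ 𝓔, ¬ IsInitialSegmentBasic δ γ D) ∧
    (∀ D ∈ 𝓔, ∀ D' ∈ 𝓔, D ≠ D' →
      ∀ H, IsBasic δ γ τ S H → H ⊆ K → ¬ IsInitialSegmentBasic δ γ H →
        ¬ (D ⊆ H ∧ D' ⊆ H))

section TreeRefinement

variable {α : Type*} {G 𝓑 : Set (Set α)}

def CommonSuperset (G : Set (Set α)) (C C' : Set α) : Prop := ∃ H ∈ G, C ⊆ H ∧ C' ⊆ H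

lemma CommonSuperset.symm {C C' : Set α} (h : CommonSuperset G C C') : CommonSuperset G C' C :=
  let ⟨H, hH, hC, hC'⟩ := h; ⟨H, hH, hC', hC⟩

lemma CommonSuperset.trans
    (htree : ∀ H ∈ G, ∀ H' ∈ G, (H ∩ H').Nonempty → H ⊆ H' ∨ H' ⊆ H)
    {C C' C'' : Set α} (hC' : C'.Nonempty)
    (h₁ : CommonSuperset G C C') (h₂ : CommonSuperset G C' C'') : CommonSuperset G C C'' := by
  obtain ⟨H, hH, hC, hC'H⟩ := h₁
  obtain ⟨H', hH', hC'H', hC''⟩ := h₂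
  obtain ⟨u, hu⟩ := hC'
  rcases htree H hH H' hH' ⟨u, hC'H hu, hC'H' hu⟩ with hle | hle
  · exact ⟨H', hH', hC.trans hle, hC''⟩
  · exact ⟨H, hH, hC, hC''.trans hle⟩

lemma exists_classwise_superset (hne : ∀ H ∈ G, H.Nonempty)
    (htree : ∀ H ∈ G, ∀ H' ∈ G, (H ∩ H').Nonempty → H ⊆ H' ∨ H' ⊆ H)
    (hbdd : ∀ 𝒜 ⊆ G, 𝒜.Countable → 𝒜.Nonempty → (⋂₀ 𝒜).Nonempty →
      ∃ D ∈ G, ∀ H ∈ 𝒜, H ⊆ D)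
    (h𝓑 : 𝓑 ⊆ G) (hc : 𝓑.Countable) :
    ∃ E : Set α → Set α, ∀ C ∈ 𝓑, E C ∈ G ∧ C ⊆ E C ∧
      ∀ C' ∈ 𝓑, CommonSuperset G C C' → E C = E C' := by
  set cls : Set α → Set (Set α) := fun C => {C' ∈ 𝓑 | CommonSuperset G C C'}
  have hself : ∀ C ∈ 𝓑, C ∈ cls C := fun C hC =>
    ⟨hC, C, h𝓑 hC, subset_rfl, subset_rfl⟩
  have hcls : ∀ C ∈ 𝓑, ∃ D ∈ G, ∀ C' ∈ cls C, C' ⊆ D := by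
    intro C hC
    choose! H hH hCH hC'H using fun C' (hC' : C' ∈ cls C) => hC'.2
    obtain ⟨D, hD, hHD⟩ := hbdd (H '' cls C) (Set.image_subset_iff.2 hH)
      ((hc.mono (Set.sep_subset _ _)).image H) ((Set.nonempty_of_mem (hself C hC)).image H)
      ((hne C (h𝓑 hC)).mono (Set.subset_sInter (Set.forall_mem_image.2 hCH)))
    exact ⟨D, hD, fun C' hC' => (hC'H C' hC').trans (hHD _ (Set.mem_image_of_mem H hC'))⟩
  -- choosing the superset as a function of the class makes `E` constant on classes
  have hub : ∀ 𝒞 ∈ cls '' 𝓑, ∃ D ∈ G, ∀ C' ∈ 𝒞, C' ⊆ D := by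
    rintro _ ⟨C, hC, rfl⟩
    exact hcls C hC
  choose! ub hub using hub
  have hcls_eq : ∀ C ∈ 𝓑, ∀ C' ∈ 𝓑, CommonSuperset G C C' → cls C = cls C' := by
    intro C hC C' hC' h
    ext C''
    exact and_congr_right fun _ => ⟨fun h' => (h.symm.trans htree (hne C (h𝓑 hC)) h'),
      fun h' => h.trans htree (hne C' (h𝓑 hC')) h'⟩
  exact ⟨fun C => ub (cls C), fun C hC => ⟨(hub _ ⟨C, hC, rfl⟩).1,
    (hub _ ⟨C, hC, rfl⟩).2 C (hself C hC),
    fun C' hC' h => congrArg ub (hcls_eq C hC C' hC' h)⟩⟩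

theorem exists_pairwise_disjoint_refinement (hne : ∀ H ∈ G, H.Nonempty)
    (htree : ∀ H ∈ G, ∀ H' ∈ G, (H ∩ H').Nonempty → H ⊆ H' ∨ H' ⊆ H)
    (hbdd : ∀ 𝒜 ⊆ G, 𝒜.Countable → 𝒜.Nonempty → (⋂₀ 𝒜).Nonempty →
      ∃ D ∈ G, ∀ H ∈ 𝒜, H ⊆ D)
    (h𝓑 : 𝓑 ⊆ G) (hc : 𝓑.Countable) :
    ∃ 𝓔 ⊆ G, 𝓔.Countable ∧ 𝓔.Pairwise Disjoint ∧
      (∀ C ∈ 𝓑, ∃! D, D ∈ 𝓔 ∧ C ⊆ D) ∧ (∀ D ∈ 𝓔, ∃ C ∈ 𝓑, C ⊆ D) ∧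
      ∀ D ∈ 𝓔, ∀ D' ∈ 𝓔, D ≠ D' → ∀ H ∈ G, ¬ (D ⊆ H ∧ D' ⊆ H) := by
  obtain ⟨E, hE⟩ := exists_classwise_superset hne htree hbdd h𝓑 hc
  have hsep : ∀ C ∈ 𝓑, ∀ C' ∈ 𝓑, ∀ H ∈ G, E C ⊆ H → E C' ⊆ H → E C = E C' :=
    fun C hC C' hC' H hH h h' => (hE C hC).2.2 C' hC'
      ⟨H, hH, (hE C hC).2.1.trans h, (hE C' hC').2.1.trans h'⟩
  have hmeet : ∀ C ∈ 𝓑, ∀ C' ∈ 𝓑, (E C ∩ E C').Nonempty → E C = E C' := by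
    intro C hC C' hC' h
    rcases htree _ (hE C hC).1 _ (hE C' hC').1 h with hle | hle
    · exact hsep C hC C' hC' _ (hE C' hC').1 hle subset_rfl
    · exact hsep C hC C' hC' _ (hE C hC).1 subset_rfl hle
  refine ⟨E '' 𝓑, Set.image_subset_iff.2 fun C hC => (hE C hC).1, hc.image E, ?_,
    fun C hC => ⟨E C, ⟨Set.mem_image_of_mem E hC, (hE C hC).2.1⟩, ?_⟩,
    Set.forall_mem_image.2 fun C hC => ⟨C, hC, (hE C hC).2.1⟩, ?_⟩
  · rintro _ ⟨C, hC, rfl⟩ _ ⟨C', hC', rfl⟩ hne'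
    exact Set.disjoint_iff_inter_eq_empty.2
      (Set.not_nonempty_iff_eq_empty.1 fun h => hne' (hmeet C hC C' hC' h))
  · rintro _ ⟨⟨C', hC', rfl⟩, hCC'⟩
    exact (hmeet C hC C' hC' ((hne C (h𝓑 hC)).mono (Set.subset_inter (hE C hC).2.1 hCC'))).symm
  · rintro _ ⟨C, hC, rfl⟩ _ ⟨C', hC', rfl⟩ hne' H hH ⟨h, h'⟩
    exact hne' (hsep C hC C' hC' H hH h h')

end TreeRefinement

namespace SOrd

lemma pos_lt_pos_iff {α β : Ordinal} : pos α < pos β ↔ α < β := Sum.Lex.inr_lt_inr_iff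

lemma neg_lt_neg_iff {α β : Ordinal} : neg α < neg β ↔ β < α :=
  Sum.Lex.inl_lt_inl_iff.trans OrderDual.toDual_lt_toDual

lemma neg_lt_pos (α β : Ordinal) : neg α < pos β := Sum.Lex.inl_lt_inr _ _

lemma isPos_pos (α : Ordinal) : IsPos (pos α) := ⟨α, rfl⟩

lemma not_isPos_neg (α : Ordinal) : ¬ IsPos (neg α) := by
  rintro ⟨β, h⟩
  cases h

lemma neg_injective : Function.Injective neg := by
  intro α β h
  simpa [neg] using h

lemma isBetween_pos {δ α : Ordinal} : IsBetween δ (pos α) ↔ α < δ :=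
  ⟨fun h => pos_lt_pos_iff.1 h.2, fun h => ⟨neg_lt_pos _ _, pos_lt_pos_iff.2 h⟩⟩

lemma isBetween_neg {δ α : Ordinal} : IsBetween δ (neg α) ↔ α < δ :=
  ⟨fun h => neg_lt_neg_iff.1 h.1, fun h => ⟨neg_lt_neg_iff.2 h, neg_lt_pos _ _⟩⟩

end SOrd

open SOrd

section Llt

variable {y w z : List SOrd}

lemma getElem_eq_of_take_eq {α : Type*} {x y : List α} {k i : ℕ} (h : x.take k = y.take k)
    (hik : i < k) (hx : i < x.length) (hy : i < y.length) : x[i] = y[i] := by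
  simpa [List.getElem?_take, hik, hx, hy] using congrArg (·[i]?) h

lemma not_llt_of_take_eq_of_getElem_lt {k : ℕ} (hy : k < y.length) (hz : k < z.length)
    (htake : y.take k = z.take k) (hlt : y[k] < z[k]) : ¬ Llt z y := by
  rintro (⟨j, hjz, hjy, htake', hlt'⟩ | ⟨-, htake', -⟩ | ⟨-, htake', -⟩)
  · rcases lt_trichotomy j k with hjk | rfl | hkj
    · rw [getElem_eq_of_take_eq htake hjk hjy hjz] at hlt'
      exact lt_irrefl _ hlt'
    · exact lt_asymm hlt hlt'
    · rw [getElem_eq_of_take_eq htake' hkj hz hy] at hlt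
      exact lt_irrefl _ hlt
  · rw [← (List.prefix_iff_eq_take.2 htake'.symm).getElem hz] at hlt
    exact lt_irrefl _ hlt
  · rw [← (List.prefix_iff_eq_take.2 htake'.symm).getElem hy] at hlt
    exact lt_irrefl _ hlt

lemma llt_iff_isPos_of_isPrefix (hp : w <+: z) (hl : w.length < z.length) :
    Llt w z ↔ IsPos z[w.length] := by
  refine ⟨?_, fun hpos => Or.inr (Or.inl ⟨hl, (List.prefix_iff_eq_take.1 hp).symm, hpos⟩)⟩
  rintro (⟨k, hkw, hkz, -, hlt⟩ | ⟨_, -, hpos⟩ | ⟨h, -, -⟩)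
  · rw [hp.getElem hkw] at hlt
    exact (lt_irrefl _ hlt).elim
  · exact hpos
  · omega

lemma llt_append_pos_iff_of_isPrefix {l : Ordinal} (hp : w <+: z) (hl : w.length < z.length) :
    Llt z (w ++ [pos l]) ↔ z[w.length] < pos l ∨
      (z[w.length] = pos l ∧ ∃ h : w.length + 1 < z.length, ¬ IsPos z[w.length + 1]) := by
  constructor
  · rintro (⟨k, hkz, hkx, -, hlt⟩ | ⟨h, -, -⟩ | ⟨h, htake, hneg⟩)
    · have hk : k = w.length := by
        by_contra hne
        simp only [List.length_append, List.length_singleton] at hkx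
        rw [List.getElem_append_left (by omega), ← hp.getElem (by omega)] at hlt
        exact lt_irrefl _ hlt
      subst hk
      exact Or.inl (by simpa using hlt)
    · simp only [List.length_append, List.length_singleton] at h
      omega
    · have hxz := List.prefix_iff_eq_take.2 htake.symm
      simp only [List.length_append, List.length_singleton] at h hneg
      exact Or.inr ⟨by simp [← hxz.getElem], h, hneg⟩
  · rintro (hlt | ⟨heq, h, hneg⟩)
    · refine Or.inl ⟨w.length, hl, by simp, ?_, by simpa using hlt⟩
      rw [List.take_left, ← List.prefix_iff_eq_take.1 hp]
    · refine Or.inr (Or.inr ⟨by simpa using h, ?_, by simpa using hneg⟩)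
      simp only [List.length_append, List.length_singleton]
      rw [← List.take_append_getElem hl, heq, ← List.prefix_iff_eq_take.1 hp]

lemma isPrefix_of_llt_of_llt_append {b : SOrd} (h₁ : Llt w z) (h₂ : Llt z (w ++ [b])) :
    w <+: z := by
  have hw : w <+: w ++ [b] := List.prefix_append _ _
  rcases h₁ with ⟨k, hkw, hkz, htake, hlt⟩ | ⟨-, htake, -⟩ | ⟨hzw, htake, hneg⟩
  · refine absurd h₂ (not_llt_of_take_eq_of_getElem_lt (by simp; omega) hkz ?_ ?_)
    · rw [← htake, List.take_append_of_le_length hkw.le]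
    · rwa [← hw.getElem hkw]
  · exact List.prefix_iff_eq_take.2 htake.symm
  · have hzx := (List.prefix_iff_eq_take.2 htake.symm).trans hw
    refine absurd h₂ ((llt_iff_isPos_of_isPrefix hzx (by simp; omega)).not.2 ?_)
    rwa [← hw.getElem hzw]

end Llt

section Lset

variable {δ γ : Ordinal} {w z : List SOrd}

lemma mem_Lset_of_isPrefix (hz : z ∈ Lset δ γ) (hp : w <+: z) (hw : w ≠ []) :
    w ∈ Lset δ γ := by
  obtain ⟨-, ⟨_, α, hα, h0⟩, hbet⟩ := hz
  have hw0 : 0 < w.length := List.length_pos_iff.2 hw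
  refine ⟨hw, ⟨hw0, α, hα, by rw [hp.getElem hw0]; exact h0⟩, fun k hk hk0 => ?_⟩
  rw [hp.getElem hk]
  exact hbet k _ hk0

lemma append_mem_Lset {b : SOrd} (hw : w ∈ Lset δ γ) (hb : IsBetween δ b) :
    w ++ [b] ∈ Lset δ γ := by
  obtain ⟨hne, ⟨hw0, α, hα, h0⟩, hbet⟩ := hw
  refine ⟨by simp, ⟨by simp, α, hα, by rw [List.getElem_append_left hw0]; exact h0⟩,
    fun k hk hk0 => ?_⟩
  simp only [List.length_append, List.length_singleton] at hk
  rcases Nat.lt_succ_iff_lt_or_eq.1 hk with hk | rfl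
  · rw [List.getElem_append_left hk]
    exact hbet k hk hk0
  · simpa using hb

lemma pos_of_mem_Lset (hw : w ∈ Lset δ γ) : 0 < γ := by
  obtain ⟨-, ⟨-, α, hα, -⟩, -⟩ := hw
  exact pos_of_gt hα

lemma pair_mem_Lbelow (hγ : 0 < γ) {ζ : Ordinal} (hζ : ζ < δ) (α : Ordinal) :
    [pos 0, neg ζ] ∈ Lbelow δ γ α := by
  refine ⟨⟨by simp, ⟨by simp, 0, hγ, rfl⟩, fun k hk hk0 => ?_⟩, ?_⟩
  · obtain rfl : k = 1 := by simp at hk; omega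
    exact isBetween_neg.2 hζ
  rcases eq_zero_or_pos α with rfl | hα
  · exact Or.inr (Or.inr ⟨by simp, rfl, not_isPos_neg ζ⟩)
  · exact Or.inl ⟨0, by simp, by simp, rfl, pos_lt_pos_iff.2 hα⟩

end Lset

/-- The set `J_{w⌢⟨l⟩}` in normal form, see `Jset_append_pos`. -/
def stemCone (δ γ : Ordinal) (w : List SOrd) (l : Ordinal) : Set (List SOrd) :=
  {z | z ∈ Lset δ γ ∧ (z = w ∨
    (∃ h : w.length < z.length, w <+: z ∧ ∃ β < l, z[w.length] = pos β) ∨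
    (∃ h : w.length + 1 < z.length, w <+: z ∧
      z[w.length] = pos l ∧ ¬ IsPos z[w.length + 1]))}

section stemCone

variable {δ γ : Ordinal} {w w' z : List SOrd} {l l' : Ordinal}

lemma Jset_append_pos (w : List SOrd) (l : Ordinal) :
    Jset δ γ (w ++ [pos l]) = stemCone δ γ w l := by
  have hstem : (w ++ [pos l]).take ((w ++ [pos l]).length - 1) = w := by simp
  ext z
  simp only [Jset, stemCone, Set.mem_ofPred_eq, hstem]
  refine and_congr_right fun _ => ⟨?_, ?_⟩
  · rintro ⟨rfl | hwz, hzx⟩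
    · exact Or.inl rfl
    have hp := isPrefix_of_llt_of_llt_append hwz hzx
    rcases hp.length_le.eq_or_lt with heq | hl
    · exact Or.inl (hp.eq_of_length heq).symm
    obtain ⟨β, hβ⟩ := (llt_iff_isPos_of_isPrefix hp hl).1 hwz
    rcases (llt_append_pos_iff_of_isPrefix hp hl).1 hzx with hlt | ⟨heq, h, hneg⟩
    · exact Or.inr (Or.inl ⟨hl, hp, β, pos_lt_pos_iff.1 (hβ ▸ hlt), hβ⟩)
    · exact Or.inr (Or.inr ⟨h, hp, heq, hneg⟩)
  · rintro (rfl | ⟨hl, hp, β, hβl, hβ⟩ | ⟨h, hp, heq, hneg⟩)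
    · exact ⟨Or.inl rfl, (llt_iff_isPos_of_isPrefix (List.prefix_append _ _) (by simp)).2
        (by simpa using isPos_pos l)⟩
    · exact ⟨Or.inr ((llt_iff_isPos_of_isPrefix hp hl).2 (hβ ▸ isPos_pos β)),
        (llt_append_pos_iff_of_isPrefix hp hl).2 (Or.inl (hβ ▸ pos_lt_pos_iff.2 hβl))⟩
    · have hl : w.length < z.length := by omega
      exact ⟨Or.inr ((llt_iff_isPos_of_isPrefix hp hl).2 (heq ▸ isPos_pos l)),
        (llt_append_pos_iff_of_isPrefix hp hl).2 (Or.inr ⟨heq, h, hneg⟩)⟩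

lemma isPrefix_of_mem_stemCone (h : z ∈ stemCone δ γ w l) : w <+: z := by
  rcases h.2 with rfl | ⟨_, hp, _⟩ | ⟨_, hp, _⟩
  · exact List.prefix_refl _
  · exact hp
  · exact hp

lemma self_mem_stemCone (hw : w ∈ Lset δ γ) : w ∈ stemCone δ γ w l := ⟨hw, Or.inl rfl⟩

lemma stemCone_mono (h : l ≤ l') : stemCone δ γ w l ⊆ stemCone δ γ w l' := by
  rintro z ⟨hz, rfl | ⟨hl, hp, β, hβ, he⟩ | ⟨hl, hp, he, hneg⟩⟩
  · exact ⟨hz, Or.inl rfl⟩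
  · exact ⟨hz, Or.inr (Or.inl ⟨hl, hp, β, hβ.trans_le h, he⟩)⟩
  rcases h.eq_or_lt with rfl | h
  · exact ⟨hz, Or.inr (Or.inr ⟨hl, hp, he, hneg⟩)⟩
  · exact ⟨hz, Or.inr (Or.inl ⟨by omega, hp, l, h, he⟩)⟩

lemma stemCone_subset_of_mem (hw' : w' ∈ stemCone δ γ w l) (hne : w' ≠ w) :
    stemCone δ γ w' l' ⊆ stemCone δ γ w l := by
  intro z hz
  have hp' := isPrefix_of_mem_stemCone hz
  rcases hw'.2 with rfl | ⟨hl, hp, β, hβ, he⟩ | ⟨hl, hp, he, hneg⟩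
  · exact absurd rfl hne
  · refine ⟨hz.1, Or.inr (Or.inl ⟨hl.trans_le hp'.length_le, hp.trans hp', β, hβ, ?_⟩)⟩
    rwa [← hp'.getElem hl]
  · refine ⟨hz.1, Or.inr (Or.inr ⟨hl.trans_le hp'.length_le, hp.trans hp', ?_, ?_⟩)⟩
    · rwa [← hp'.getElem (by omega)]
    · rwa [← hp'.getElem hl]

lemma mem_stemCone_of_isPrefix (hz : z ∈ stemCone δ γ w l) (hp : w' <+: z)
    (hlen : w.length + 2 ≤ w'.length) (hw' : w' ∈ Lset δ γ) : w' ∈ stemCone δ γ w l := by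
  have hwz := isPrefix_of_mem_stemCone hz
  have hww' : w <+: w' := List.prefix_of_prefix_length_le hwz hp (by omega)
  rcases hz.2 with rfl | ⟨hl, -, β, hβ, he⟩ | ⟨hl, -, he, hneg⟩
  · have := hp.length_le
    omega
  · refine ⟨hw', Or.inr (Or.inl ⟨by omega, hww', β, hβ, ?_⟩)⟩
    rwa [hp.getElem]
  · refine ⟨hw', Or.inr (Or.inr ⟨by omega, hww', ?_, ?_⟩)⟩
    · rwa [hp.getElem]
    · rwa [hp.getElem]

lemma stemCone_subset_of_length_lt (hz : z ∈ stemCone δ γ w l)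
    (hz' : z ∈ stemCone δ γ w' l') (heven : w.length % 2 = 0) (heven' : w'.length % 2 = 0)
    (hlt : w.length < w'.length) :
    stemCone δ γ w' l' ⊆ stemCone δ γ w l := by
  have hp' := isPrefix_of_mem_stemCone hz'
  have hw' : w' ≠ [] := List.ne_nil_of_length_pos (by omega)
  refine stemCone_subset_of_mem ?_ (by rintro rfl; omega)
  exact mem_stemCone_of_isPrefix hz hp' (by omega) (mem_Lset_of_isPrefix hz.1 hp' hw')

lemma stemCone_total_of_mem (hz : z ∈ stemCone δ γ w l) (hz' : z ∈ stemCone δ γ w' l')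
    (heven : w.length % 2 = 0) (heven' : w'.length % 2 = 0) :
    stemCone δ γ w l ⊆ stemCone δ γ w' l' ∨
      stemCone δ γ w' l' ⊆ stemCone δ γ w l := by
  rcases lt_trichotomy w.length w'.length with hlt | heq | hlt
  · exact Or.inr (stemCone_subset_of_length_lt hz hz' heven heven' hlt)
  · obtain rfl : w = w' := (List.prefix_of_prefix_length_le (isPrefix_of_mem_stemCone hz)
      (isPrefix_of_mem_stemCone hz') heq.le).eq_of_length heq
    exact (le_total l l').imp stemCone_mono stemCone_mono
  · exact Or.inl (stemCone_subset_of_length_lt hz' hz heven' heven hlt)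

lemma stemCone_ne_Lbelow (hw : w ∈ Lset δ γ) (hw2 : 2 ≤ w.length) (hδ : 1 < δ)
    (α : Ordinal) : stemCone δ γ w l ≠ Lbelow δ γ α := by
  intro he
  have hγ := pos_of_mem_Lset hw
  have hshort : ∀ ζ < δ, [pos 0, neg ζ] = w := fun ζ hζ => by
    have hmem := he ▸ pair_mem_Lbelow hγ hζ α
    have := (isPrefix_of_mem_stemCone hmem).length_le
    exact ((isPrefix_of_mem_stemCone hmem).eq_of_length (by simp at this ⊢; omega)).symm
  have := (hshort 0 (zero_lt_one.trans hδ)).trans (hshort 1 hδ).symm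
  simp only [List.cons.injEq, and_true, true_and] at this
  exact zero_ne_one (neg_injective this)

end stemCone

lemma rIdx_append_congr {τ : Ordinal} {w : List SOrd} {b c : SOrd} (hb : b < pos τ)
    (hc : c < pos τ) :
    rIdx τ (w ++ [b]) = rIdx τ (w ++ [c]) := by
  have key : ∀ {b c : SOrd}, c < pos τ → rIdx τ (w ++ [b]) ⊆ rIdx τ (w ++ [c]) := by
    rintro b c hc i ⟨hi, h2, heven, hlt⟩
    simp only [List.length_append, List.length_singleton] at hi
    refine ⟨by simpa using hi, h2, heven, ?_⟩
    rcases Nat.lt_succ_iff_lt_or_eq.1 hi with hi | rfl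
    · rwa [List.getElem_append_left hi] at hlt ⊢
    · simpa using hc
  exact (key hc).antisymm (key hb)

namespace Relevant

variable {δ γ τ : Ordinal} {S : Ordinal → Set Ordinal} {w y : List SOrd} {l Λ : Ordinal}

lemma exists_eq_append_pos (hy : Relevant δ γ τ S y) : ∃ w l, y = w ++ [pos l] := by
  obtain ⟨-, h3, -, halt, -, hlast, -, heven, -⟩ := hy
  obtain ⟨l, hl⟩ := (halt _ hlast).2 heven
  refine ⟨y.take (y.length - 1), l, ?_⟩
  rw [← hl, List.take_append_getElem, Nat.sub_add_cancel (by omega), List.take_length]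

lemma two_le_length_stem (hr : Relevant δ γ τ S (w ++ [pos l])) : 2 ≤ w.length := by
  have := hr.2.1
  simp only [List.length_append, List.length_singleton] at this
  omega

lemma even_length_stem (hr : Relevant δ γ τ S (w ++ [pos l])) : w.length % 2 = 0 := by
  have := hr.2.2.1
  simp only [List.length_append, List.length_singleton] at this
  omega

lemma stem_mem_Lset (hr : Relevant δ γ τ S (w ++ [pos l])) : w ∈ Lset δ γ :=
  mem_Lset_of_isPrefix hr.1 (List.prefix_append _ _)
    (List.ne_nil_of_length_pos (by have := two_le_length_stem hr; omega))

lemma last_lt_tau (hr : Relevant δ γ τ S (w ++ [pos l])) : l < τ := by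
  obtain ⟨_, -, -, hlt⟩ := hr.2.2.2.2.2
  simpa [pos_lt_pos_iff] using hlt

lemma last_lt_delta (hr : Relevant δ γ τ S (w ++ [pos l])) : l < δ := by
  have := hr.1.2.2 w.length (by simp) (by have := two_le_length_stem hr; omega)
  simpa [isBetween_pos] using this

lemma append_pos_of_lt (hr : Relevant δ γ τ S (w ++ [pos l])) (hΛτ : Λ < τ) (hΛδ : Λ < δ) :
    Relevant δ γ τ S (w ++ [pos Λ]) := by
  have hlτ := last_lt_tau hr
  have heven := even_length_stem hr
  have hw := stem_mem_Lset hr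
  obtain ⟨-, h3, hodd, halt, hcol, hlast⟩ := hr
  have hrIdx : rIdx τ (w ++ [pos Λ]) = rIdx τ (w ++ [pos l]) :=
    rIdx_append_congr (pos_lt_pos_iff.2 hΛτ) (pos_lt_pos_iff.2 hlτ)
  have hlen : (w ++ [pos Λ]).length = (w ++ [pos l]).length := by simp
  refine ⟨append_mem_Lset hw (isBetween_pos.2 hΛδ), hlen ▸ h3, hlen ▸ hodd,
    fun i hi => ?_, fun i hi j hj hij hi' hj' => ?_, hlen ▸ hrIdx ▸ hlast⟩
  · simp only [List.length_append, List.length_singleton] at hi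
    rcases Nat.lt_succ_iff_lt_or_eq.1 hi with hi | rfl
    · have := halt i (by simp; omega)
      rwa [List.getElem_append_left hi] at this ⊢
    · simpa [heven] using isPos_pos Λ
  · rw [hrIdx] at hi hj
    have hjw : j - 1 < w.length := by obtain ⟨hj, -⟩ := hj; simp at hj; omega
    have hiw : i - 1 < w.length := by omega
    have := hcol i hi j hj hij (by simp; omega) (by simp; omega)
    rwa [List.getElem_append_left hiw, List.getElem_append_left hjw] at this ⊢

end Relevant

section bracket

variable {δ γ : Ordinal} {a w z : List SOrd} {l : Ordinal}

lemma mem_bracketNeg_of_isPrefix (hw : w ∈ bracketNeg δ γ a) (hp : w <+: z)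
    (hz : z ∈ Lset δ γ) : z ∈ bracketNeg δ γ a := by
  obtain ⟨-, hlen, htake, hlt, ha, hval⟩ := hw
  have htake' : z.take (a.length - 1) = w.take (a.length - 1) :=
    ((hp.take _).eq_of_length (by have := hp.length_le; simp; omega)).symm
  refine ⟨hz, hlen.trans hp.length_le, htake'.trans htake, hlt.trans_le hp.length_le, ha, ?_⟩
  rwa [← hp.getElem hlt]

lemma stemCone_subset_bracketNeg (hw : w ∈ bracketNeg δ γ a) :
    stemCone δ γ w l ⊆ bracketNeg δ γ a :=
  fun _ hz => mem_bracketNeg_of_isPrefix hw (isPrefix_of_mem_stemCone hz) hz.1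

lemma stemCone_subset_bracketPos
    (halast : ∀ h : a.length - 1 < a.length, a[a.length - 1]'h = pos 0)
    (hw : w ∈ bracketPos δ γ a) : stemCone δ γ w l ⊆ bracketPos δ γ a := by
  intro z hz
  obtain ⟨⟨hwL, hlen, htake⟩, hwneg⟩ := hw
  have hp := isPrefix_of_mem_stemCone hz
  have htake' : z.take (a.length - 1) = w.take (a.length - 1) :=
    ((hp.take _).eq_of_length (by have := hp.length_le; simp; omega)).symm
  refine ⟨⟨hz.1, hlen.trans hp.length_le, htake'.trans htake⟩, ?_⟩
  rintro ⟨-, -, -, hlt, ha, hval⟩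
  rw [halast ha] at hval
  rcases hlen.eq_or_lt with heq | hlt'
  · -- `z` extends `w` by a positive entry, which cannot lie below `pos 0`
    rcases hz.2 with rfl | ⟨hl, -, β, -, he⟩ | ⟨hl, -, he, -⟩
    · omega
    all_goals
      simp only [heq, he, pos_lt_pos_iff] at hval
      exact not_lt_zero hval
  · refine hwneg ⟨hwL, by omega, htake, hlt', ha, ?_⟩
    rwa [halast ha, hp.getElem hlt']

end bracket

section basic

variable {δ γ τ : Ordinal} {S : Ordinal → Set Ordinal} {H H' : Set (List SOrd)}

lemma IsBasic.eq_singleton_or_eq_stemCone (hb : IsBasic δ γ τ S H)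
    (hni : ¬ IsInitialSegmentBasic δ γ H) :
    (∃ u, H = {u}) ∨
      ∃ w l, Relevant δ γ τ S (w ++ [pos l]) ∧ H = stemCone δ γ w l := by
  rcases hb with h | ⟨y, hy, rfl⟩ | ⟨u, -, rfl⟩
  · exact absurd h hni
  · obtain ⟨w, l, rfl⟩ := hy.exists_eq_append_pos
    exact Or.inr ⟨w, l, hy, Jset_append_pos w l⟩
  · exact Or.inl ⟨u, rfl⟩

lemma IsBasic.nonempty (hb : IsBasic δ γ τ S H) (hni : ¬ IsInitialSegmentBasic δ γ H) :
    H.Nonempty := by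
  rcases hb.eq_singleton_or_eq_stemCone hni with ⟨u, rfl⟩ | ⟨w, l, hr, rfl⟩
  · exact Set.singleton_nonempty u
  · exact ⟨w, self_mem_stemCone hr.stem_mem_Lset⟩

lemma IsBasic.subset_total_of_inter_nonempty (hb : IsBasic δ γ τ S H)
    (hni : ¬ IsInitialSegmentBasic δ γ H) (hb' : IsBasic δ γ τ S H')
    (hni' : ¬ IsInitialSegmentBasic δ γ H') (hmeet : (H ∩ H').Nonempty) :
    H ⊆ H' ∨ H' ⊆ H := by
  obtain ⟨z, hz, hz'⟩ := hmeet
  rcases hb.eq_singleton_or_eq_stemCone hni with ⟨u, rfl⟩ | ⟨w, l, hr, rfl⟩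
  · exact Or.inl (Set.singleton_subset_iff.2 (Set.mem_singleton_iff.1 hz ▸ hz'))
  rcases hb'.eq_singleton_or_eq_stemCone hni' with ⟨u, rfl⟩ | ⟨w', l', hr', rfl⟩
  · exact Or.inr (Set.singleton_subset_iff.2 (Set.mem_singleton_iff.1 hz' ▸ hz))
  · exact stemCone_total_of_mem hz hz' hr.even_length_stem hr'.even_length_stem

end basic

section bound

variable {δ γ τ : Ordinal} {S : Ordinal → Set Ordinal}

lemma exists_stemCone_superset {ι : Type} [Countable ι] [Nonempty ι]
    (hδ : ℵ₀ < δ.cof) (hτ : ℵ₀ < τ.cof) {W : ι → List SOrd} {L : ι → Ordinal}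
    {z : List SOrd} (hr : ∀ i, Relevant δ γ τ S (W i ++ [pos (L i)]))
    (hz : ∀ i, z ∈ stemCone δ γ (W i) (L i)) :
    ∃ i₀ Λ, Relevant δ γ τ S (W i₀ ++ [pos Λ]) ∧
      ∀ i, stemCone δ γ (W i) (L i) ⊆ stemCone δ γ (W i₀) Λ := by
  set len : ι → ℕ := fun i => (W i).length
  obtain ⟨i₀, hmin⟩ : ∃ i₀, ∀ i, len i₀ ≤ len i :=
    ⟨Function.argmin len, fun i => Function.argmin_le len i⟩
  have hι : #ι ≤ ℵ₀ := Cardinal.mk_le_aleph0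
  have hLΛ : ∀ i, L i < ⨆ i, L i + 1 := fun i =>
    (Order.lt_add_one_iff.2 le_rfl).trans_le (Ordinal.le_iSup (fun i => L i + 1) i)
  refine ⟨i₀, ⨆ i, L i + 1, (hr i₀).append_pos_of_lt
    (Ordinal.iSup_add_one_lt_of_lt_cof (hι.trans_lt hτ) fun i => (hr i).last_lt_tau)
    (Ordinal.iSup_add_one_lt_of_lt_cof (hι.trans_lt hδ) fun i => (hr i).last_lt_delta),
    fun i => ?_⟩
  rcases (hmin i).eq_or_lt with heq | hlt
  · have hW : W i₀ = W i := (List.prefix_of_prefix_length_le (isPrefix_of_mem_stemCone (hz i₀))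
      (isPrefix_of_mem_stemCone (hz i)) (hmin i)).eq_of_length heq
    rw [hW]
    exact stemCone_mono (hLΛ i).le
  · exact stemCone_subset_of_length_lt (stemCone_mono (hLΛ i₀).le (hz i₀)) (hz i)
      (hr i₀).even_length_stem (hr i).even_length_stem hlt

end bound

def nonInitialBasicIn (δ γ τ : Ordinal) (S : Ordinal → Set Ordinal) (K : Set (List SOrd)) :
    Set (Set (List SOrd)) :=
  {H | IsBasic δ γ τ S H ∧ H ⊆ K ∧ ¬ IsInitialSegmentBasic δ γ H}

section nonInitialBasicIn

variable {δ γ τ : Ordinal} {S : Ordinal → Set Ordinal} {a w₀ z : List SOrd} {l₀ : Ordinal}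
  {K H : Set (List SOrd)}

lemma stemCone_mem_nonInitialBasicIn (hδ : ℵ₀ < δ.cof)
    (halast : ∀ h : a.length - 1 < a.length, a[a.length - 1]'h = pos 0)
    (hK : K = bracketNeg δ γ a ∨ K = bracketPos δ γ a) {w : List SOrd} {l : Ordinal}
    (hr : Relevant δ γ τ S (w ++ [pos l])) (hw : w ∈ K) :
    stemCone δ γ w l ∈ nonInitialBasicIn δ γ τ S K := by
  refine ⟨Or.inr (Or.inl ⟨_, hr, (Jset_append_pos w l).symm⟩), ?_, ?_⟩
  · rcases hK with rfl | rfl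
    · exact stemCone_subset_bracketNeg hw
    · exact stemCone_subset_bracketPos halast hw
  · rintro ⟨α, -, he⟩
    have hδ1 : 1 < δ := Ordinal.one_lt_of_isSuccLimit
      (Ordinal.one_lt_cof_iff.1 (Cardinal.one_lt_aleph0.trans hδ))
    exact stemCone_ne_Lbelow hr.stem_mem_Lset hr.two_le_length_stem hδ1 α he

lemma exists_stemCone_superset_of_mem (hH : H ∈ nonInitialBasicIn δ γ τ S K) (hz : z ∈ H)
    (hr₀ : Relevant δ γ τ S (w₀ ++ [pos l₀])) (hz₀ : z ∈ stemCone δ γ w₀ l₀) (hw₀ : w₀ ∈ K) :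
    ∃ w l, Relevant δ γ τ S (w ++ [pos l]) ∧ H ⊆ stemCone δ γ w l ∧ z ∈ stemCone δ γ w l ∧
      w ∈ K := by
  rcases hH.1.eq_singleton_or_eq_stemCone hH.2.2 with ⟨u, rfl⟩ | ⟨w, l, hr, rfl⟩
  · rw [← Set.mem_singleton_iff.1 hz]
    exact ⟨w₀, l₀, hr₀, Set.singleton_subset_iff.2 hz₀, hz₀, hw₀⟩
  · exact ⟨w, l, hr, subset_rfl, hz, hH.2.1 (self_mem_stemCone hr.stem_mem_Lset)⟩

lemma exists_nonInitialBasicIn_superset (hδ : ℵ₀ < δ.cof) (hτ : ℵ₀ < τ.cof)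
    (halast : ∀ h : a.length - 1 < a.length, a[a.length - 1]'h = pos 0)
    (hK : K = bracketNeg δ γ a ∨ K = bracketPos δ γ a) {𝒜 : Set (Set (List SOrd))}
    (h𝒜 : 𝒜 ⊆ nonInitialBasicIn δ γ τ S K) (hc : 𝒜.Countable) (hne : 𝒜.Nonempty)
    (hmeet : (⋂₀ 𝒜).Nonempty) :
    ∃ D ∈ nonInitialBasicIn δ γ τ S K, ∀ H ∈ 𝒜, H ⊆ D := by
  obtain ⟨z, hz⟩ := hmeet
  rw [Set.mem_sInter] at hz
  by_cases hcone : ∃ w l, Relevant δ γ τ S (w ++ [pos l]) ∧ stemCone δ γ w l ∈ 𝒜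
  swap
  · have hsingle : ∀ H ∈ 𝒜, H = {z} := by
      intro H hH
      rcases (h𝒜 hH).1.eq_singleton_or_eq_stemCone (h𝒜 hH).2.2 with
        ⟨u, rfl⟩ | ⟨w, l, hr, rfl⟩
      · rw [Set.mem_singleton_iff.1 (hz _ hH)]
      · exact absurd ⟨w, l, hr, hH⟩ hcone
    obtain ⟨H₀, hH₀⟩ := hne
    exact ⟨H₀, h𝒜 hH₀, fun H hH => ((hsingle H hH).trans (hsingle H₀ hH₀).symm).subset⟩
  obtain ⟨w₀, l₀, hr₀, hH₀⟩ := hcone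
  have hw₀ : w₀ ∈ K := (h𝒜 hH₀).2.1 (self_mem_stemCone hr₀.stem_mem_Lset)
  obtain ⟨f, rfl⟩ := hc.exists_eq_range hne
  choose W L hr hsub hzW hWK using fun n =>
    exists_stemCone_superset_of_mem (h𝒜 ⟨n, rfl⟩) (hz _ ⟨n, rfl⟩) hr₀ (hz _ hH₀) hw₀
  obtain ⟨n₀, Λ, hrΛ, hsubΛ⟩ := exists_stemCone_superset hδ hτ hr hzW
  exact ⟨_, stemCone_mem_nonInitialBasicIn hδ halast hK hrΛ (hWK n₀),
    Set.forall_mem_range.2 fun n => (hsub n).trans (hsubΛ n)⟩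

end nonInitialBasicIn

theorem disjoint_refinement_general (δ γ τ : Ordinal)
    (hδcof : Cardinal.aleph0 < δ.cof) (hτcof : Cardinal.aleph0 < τ.cof)
    (S : Ordinal → Set Ordinal)
    (a : List SOrd)
    (halast : ∀ h : a.length - 1 < a.length, a[a.length - 1]'h = SOrd.pos 0) :
    ∀ K, (K = bracketNeg δ γ a ∨ K = bracketPos δ γ a) →
      ∀ 𝓑 : Set (Set (List SOrd)), 𝓑.Countable →
        (∀ C ∈ 𝓑, IsBasic δ γ τ S C ∧ C ⊆ K ∧ ¬ IsInitialSegmentBasic δ γ C) →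
        HasDisjointRefinement δ γ τ S K 𝓑 := by
  intro K hK 𝓑 hc h𝓑
  obtain ⟨𝓔, h𝓔, hcount, hdisj, hcover, hsub, hsep⟩ :=
    exists_pairwise_disjoint_refinement (G := nonInitialBasicIn δ γ τ S K)
      (fun H hH => hH.1.nonempty hH.2.2)
      (fun H hH H' hH' => hH.1.subset_total_of_inter_nonempty hH.2.2 hH'.1 hH'.2.2)
      (fun _ h𝒜 => exists_nonInitialBasicIn_superset hδcof hτcof halast hK h𝒜) h𝓑 hc
  exact ⟨𝓔, hcount, fun D hD => ⟨(h𝓔 hD).1, (h𝓔 hD).2.1⟩, hdisj, hcover, hsub,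
    fun D hD => (h𝓔 hD).2.2,
    fun D hD D' hD' hne H hb hHK hni => hsep D hD D' hD' hne H ⟨hb, hHK, hni⟩⟩

/-- Any countable collection of basic sets contained in `[a]⁻` (none an initial
segment of `L^{δ,γ}`), where `a(|a|-1) = 0` and `|a| ≥ 2`, admits a countable
pairwise-disjoint refinement by basic sets contained in `[a]⁻` satisfying
(a)–(d); and the same holds for `[a]⁺`. -/
theorem disjoint_refinement (δ γ τ : Ordinal) (hδ : δ ≠ 0) (hγ : γ ≠ 0) (hτ : τ ≠ 0)
    (hδcof : Cardinal.aleph0 < δ.cof) (hτcof : Cardinal.aleph0 < τ.cof)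
    (S : Ordinal → Set Ordinal) (hS : IsPartition δ τ S)
    (a : List SOrd) (ha : a ∈ Lset δ γ) (ha2 : 2 ≤ a.length)
    (halast : ∀ h : a.length - 1 < a.length, a[a.length - 1]'h = SOrd.pos 0) :
    ∀ K, (K = bracketNeg δ γ a ∨ K = bracketPos δ γ a) →
      ∀ 𝓑 : Set (Set (List SOrd)), 𝓑.Countable →
        (∀ C ∈ 𝓑, IsBasic δ γ τ S C ∧ C ⊆ K ∧ ¬ IsInitialSegmentBasic δ γ C) →
        HasDisjointRefinement δ γ τ S K 𝓑 :=
  disjoint_refinement_general δ γ τ hδcof hτcof S a halast
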